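/- For every permutation w of {1,…,N} with permutation matrix P_w ∈ GL_N(ℂ) (P_w e_b = e_{w(b)}), and every a ∈ {1,…,N}: (P_w)^{⊗n} · L_a(z_1,…,z_n; λ_{w(1)},…,λ_{w(N)}) · ((P_w)^{⊗n})^{−1} = L_{w(a)}(z_1,…,z_n; λ_1,…,λ_N) as operators on W = (ℂ^N)^{⊗n}. (This realizes the Weyl group equivariance w·D_a = D_{w(a)} of the dynamical operators on tensor products of vector representations.) -/

import Mathlib

noncomputable section

/-- Basis of `W = (ℂ^N)^{⊗n}`: multi-indices `Fin n → Fin N`. -/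
abbrev BIdx (N n : ℕ) := Fin n → Fin N

/-- `End(W)` realized as matrices in the standard tensor basis of `W = (ℂ^N)^{⊗n}`. -/
abbrev EndW (N n : ℕ) := Matrix (BIdx N n) (BIdx N n) ℂ

/-- `E_{a,b}^{(i)}`: the matrix unit `E_{a,b}` of `gl_N` acting in the `i`-th tensor
factor of `W` (it sends the basis vector `e_{m}` to `e_{m[i ↦ a]}` if `m i = b`). -/
def Ei {N n : ℕ} (i : Fin n) (a b : Fin N) : EndW N n :=
  Matrix.of fun k m => if k = Function.update m i a ∧ m i = b then 1 else 0

/-- `E_{a,b} = Σ_i E_{a,b}^{(i)}`. -/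
def Etot {N n : ℕ} (a b : Fin N) : EndW N n := ∑ i, Ei i a b

/-- The flip `P` acting in the `i`-th and `j`-th tensor factors of `W`. -/
def Pflip {N n : ℕ} (i j : Fin n) : EndW N n :=
  Matrix.of fun k m => if k = m ∘ Equiv.swap i j then 1 else 0

/-- The rational R-matrix `R(x) = (x·Id + P)/(x+1)` acting in factors `i,j` of `W`. -/
def Rm {N n : ℕ} (x : ℂ) (i j : Fin n) : EndW N n :=
  (x + 1)⁻¹ • (x • (1 : EndW N n) + Pflip i j)

/-- `Λ^{(m)}(λ) = diag(λ_1,…,λ_N)` acting in the `m`-th tensor factor of `W`. -/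
def LamD {N n : ℕ} (lam : Fin N → ℂ) (m : Fin n) : EndW N n :=
  Matrix.diagonal fun k => lam (k m)

/-- The dynamical operator coefficient `L_a(z;λ)` on `W`. -/
def Ldyn {N n : ℕ} (z : Fin n → ℂ) (lam : Fin N → ℂ) (a : Fin N) : EndW N n :=
  (2⁻¹ : ℂ) • (Etot a a) ^ 2
  - ∑ i, z i • Ei i a a
  - ∑ b : Fin N, ∑ i : Fin n, ∑ j : Fin n, (if i < j then Ei i a b * Ei j b a else 0)
  - ∑ b ∈ Finset.univ.erase a,
      (lam b / (lam a - lam b)) • (Etot a b * Etot b a - Etot a a)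


/-- `(P_w)^{⊗n}`: the permutation matrix of `w` (`P_w e_b = e_{w(b)}`) acting in every
tensor factor of `W`. -/
def PwT {N n : ℕ} (w : Equiv.Perm (Fin N)) : EndW N n :=
  Matrix.of fun k m => if k = w ∘ m then 1 else 0

/-!
`(P_w)^{⊗n}` is the permutation matrix of the permutation `m ↦ w ∘ m` of the tensor basis, so
conjugating by it is the reindexing algebra automorphism of `End(W)`. That automorphism sends
`E_{a,b}^{(i)}` to `E_{w a, w b}^{(i)}`; applying it termwise to `L_a(z; λ ∘ w)` and reindexing
the sums over `b` by `w` gives `L_{w a}(z; λ)`.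
-/

open Equiv Matrix

theorem Matrix.permMatrix_inv_mul_mul_permMatrix {ι R : Type*} [Fintype ι] [DecidableEq ι]
    [CommSemiring R] (σ : Perm ι) (X : Matrix ι ι R) :
    σ⁻¹.permMatrix R * X * σ.permMatrix R = reindexAlgEquiv R R σ X := by
  rw [PEquiv.toMatrix_toPEquiv_mul, PEquiv.mul_toMatrix_toPEquiv]
  rfl

def tensorPerm {N n : ℕ} (w : Perm (Fin N)) : Perm (BIdx N n) :=
  piCongrRight fun _ => w

@[simp]
theorem tensorPerm_symm_apply {N n : ℕ} (w : Perm (Fin N)) (m : BIdx N n) :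
    (tensorPerm w).symm m = w.symm ∘ m :=
  rfl

theorem PwT_eq_permMatrix {N n : ℕ} (w : Perm (Fin N)) :
    (PwT w : EndW N n) = (tensorPerm w)⁻¹.permMatrix ℂ := by
  ext k m
  simp [PwT, PEquiv.toMatrix_apply, Perm.inv_def, symm_comp_eq]

theorem inv_PwT {N n : ℕ} (w : Perm (Fin N)) :
    (PwT w : EndW N n)⁻¹ = (tensorPerm w).permMatrix ℂ := by
  rw [PwT_eq_permMatrix]
  exact inv_eq_right_inv (by rw [← permMatrix_mul, mul_inv_cancel, permMatrix_one])

theorem reindex_tensorPerm_Ei {N n : ℕ} (w : Perm (Fin N)) (i : Fin n) (a b : Fin N) :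
    reindexAlgEquiv ℂ ℂ (tensorPerm w) (Ei i a b) = Ei i (w a) (w b) := by
  ext k m
  have hupdate : w.symm ∘ Function.update m i (w a) = Function.update (w.symm ∘ m) i a := by
    rw [Function.comp_update, symm_apply_apply]
  simp [Ei, ← hupdate, w.symm.injective.comp_left.eq_iff, symm_apply_eq]

theorem reindex_tensorPerm_Etot {N n : ℕ} (w : Perm (Fin N)) (a b : Fin N) :
    reindexAlgEquiv ℂ ℂ (tensorPerm w) (Etot a b : EndW N n) = Etot (w a) (w b) := by
  simp only [Etot, map_sum, reindex_tensorPerm_Ei]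

theorem reindex_tensorPerm_Ldyn {N n : ℕ} (z : Fin n → ℂ) (lam : Fin N → ℂ)
    (w : Perm (Fin N)) (a : Fin N) :
    reindexAlgEquiv ℂ ℂ (tensorPerm w) (Ldyn z (fun b => lam (w b)) a) = Ldyn z lam (w a) := by
  simp only [Ldyn, map_sub, map_smul, map_pow, map_sum, map_mul, apply_ite, map_zero,
    reindex_tensorPerm_Ei, reindex_tensorPerm_Etot]
  refine congrArg₂ HSub.hSub (congrArg (HSub.hSub _) ?_) ?_
  · exact Fintype.sum_equiv w _ _ fun _ => rfl
  · exact Finset.sum_equiv w (by simp) fun _ _ => rfl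

theorem weyl_equivariance_vector_rep_general {N n : ℕ}
    (z : Fin n → ℂ) (lam : Fin N → ℂ)
    (w : Equiv.Perm (Fin N)) (a : Fin N) :
    PwT w * Ldyn z (fun b => lam (w b)) a * (PwT (n := n) w)⁻¹ = Ldyn z lam (w a) := by
  rw [inv_PwT, PwT_eq_permMatrix, permMatrix_inv_mul_mul_permMatrix, reindex_tensorPerm_Ldyn]

/-- Weyl group equivariance of the dynamical operators on `W = (ℂ^N)^{⊗n}`:
`(P_w)^{⊗n} · L_a(z; λ_{w(1)},…,λ_{w(N)}) · ((P_w)^{⊗n})⁻¹ = L_{w(a)}(z; λ)`. -/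
theorem weyl_equivariance_vector_rep {N n : ℕ}
    (z : Fin n → ℂ) (lam : Fin N → ℂ)
    (hlam0 : ∀ a, lam a ≠ 0) (hlam : Function.Injective lam)
    (w : Equiv.Perm (Fin N)) (a : Fin N) :
    PwT w * Ldyn z (fun b => lam (w b)) a * (PwT (n := n) w)⁻¹ = Ldyn z lam (w a) :=
  weyl_equivariance_vector_rep_general z lam w a
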